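/- Let (V, ω) be a symplectic vector space of dimension 2n and β ∈ Λ^k V* with k ≤ n. Then Λβ = 0 if and only if ω^{n−k+1} ∧ β = 0 (i.e. L^{n−k+1} β = 0). -/

import Mathlib

/-!
On `j`-forms the commutator `[Λ, L]` is `n` minus the Euler operator `Σ_p e_p ∧ ι_{e^p}`, that is
`n - j`. Iterating this sl₂ relation gives `Λ L^{m+1} = L^{m+1} Λ + (m+1)(n-j-m) L^m` on `j`-forms,
and everything follows from this formula and the vanishing of forms of degree `> 2n`.

For a primitive `x` of degree `j` with `L^M x = 0`, the formula descends to `L^m x = 0` for every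
`m ≤ M` as long as `n - j - m` does not vanish, whence `x = 0`. This kills primitive forms of
degree `> n`, such as `L^{n-k+1} β` for primitive `β` (primitive because the coefficient at
`m = n - k` is `0`). It also makes `L^r` injective on `j`-forms when `j + r ≤ n` (by induction on
`j`, as `Λ` lowers the degree by two), so `L^{n-k+1} Λβ = Λ L^{n-k+1} β = 0` forces `Λβ = 0`.
-/

open ExteriorAlgebra CliffordAlgebra

/-- `L` and `Λ` raise and lower the degree of a space graded in degrees `0, …, 2n` by two, with
`[Λ, L] = n - j` in degree `j`. The subtraction `j - 2` in `Λ_mem` truncates; degrees `≤ 1` are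
covered by `Λ_eq_zero`. -/
structure IsLefschetzPair {R E : Type*} [CommRing R] [AddCommGroup E] [Module R E]
    (G : ℕ → Submodule R E) (n : ℕ) (L Λ : Module.End R E) : Prop where
  L_mem {j : ℕ} {x : E} : x ∈ G j → L x ∈ G (j + 2)
  Λ_mem {j : ℕ} {x : E} : x ∈ G j → Λ x ∈ G (j - 2)
  Λ_eq_zero {j : ℕ} {x : E} : j ≤ 1 → x ∈ G j → Λ x = 0
  Λ_L {j : ℕ} {x : E} : x ∈ G j → Λ (L x) = L (Λ x) + ((n : R) - j) • x
  eq_zero_of_lt {j : ℕ} {x : E} : 2 * n < j → x ∈ G j → x = 0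

namespace IsLefschetzPair

section CommRing

variable {R E : Type*} [CommRing R] [AddCommGroup E] [Module R E]
  {G : ℕ → Submodule R E} {n : ℕ} {L Λ : Module.End R E}

theorem pow_mem (h : IsLefschetzPair G n L Λ) (m : ℕ) {j : ℕ} {x : E} (hx : x ∈ G j) :
    (L ^ m) x ∈ G (j + 2 * m) := by
  induction m with
  | zero => simpa using hx
  | succ m ih =>
    simpa only [pow_succ', Module.End.mul_apply, mul_add, ← add_assoc] using h.L_mem ih

theorem Λ_L_pow_succ (h : IsLefschetzPair G n L Λ) (m : ℕ) {j : ℕ} {x : E} (hx : x ∈ G j) :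
    Λ ((L ^ (m + 1)) x) = (L ^ (m + 1)) (Λ x) + (((m : R) + 1) * (n - j - m)) • (L ^ m) x := by
  induction m generalizing j x with
  | zero => simp [h.Λ_L hx]
  | succ m ih =>
    rw [pow_succ, Module.End.mul_apply, ih (h.L_mem hx), h.Λ_L hx, map_add, map_smul,
      ← Module.End.mul_apply, ← pow_succ, ← Module.End.mul_apply (L ^ m), ← pow_succ, add_assoc,
      ← add_smul]
    congr 2
    push_cast
    ring

end CommRing

variable {K E : Type*} [Field K] [CharZero K] [AddCommGroup E] [Module K E]
  {G : ℕ → Submodule K E} {n : ℕ} {L Λ : Module.End K E}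

theorem eq_zero_of_Λ_eq_zero_of_pow_apply_eq_zero (h : IsLefschetzPair G n L Λ) {M j : ℕ}
    {x : E} (hx : x ∈ G j) (hΛ : Λ x = 0) (hM : (L ^ M) x = 0) (hjM : ∀ m < M, j + m ≠ n) :
    x = 0 := by
  induction M with
  | zero => simpa using hM
  | succ M ih =>
    refine ih ?_ fun m hm => hjM m (by omega)
    have key := h.Λ_L_pow_succ M hx
    rw [hM, hΛ, map_zero, map_zero, zero_add, eq_comm, smul_eq_zero] at key
    refine key.resolve_left (mul_ne_zero (Nat.cast_add_one_ne_zero M) ?_)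
    rw [sub_sub, sub_ne_zero]
    exact_mod_cast (hjM M M.lt_succ_self).symm

theorem eq_zero_of_Λ_eq_zero_of_lt (h : IsLefschetzPair G n L Λ) {j : ℕ} {x : E}
    (hx : x ∈ G j) (hΛ : Λ x = 0) (hj : n < j) : x = 0 :=
  h.eq_zero_of_Λ_eq_zero_of_pow_apply_eq_zero hx hΛ
    (h.eq_zero_of_lt (by omega) (h.pow_mem n hx)) fun m _ => by omega

theorem eq_zero_of_pow_apply_eq_zero (h : IsLefschetzPair G n L Λ) {j r : ℕ} {x : E}
    (hjr : j + r ≤ n) (hx : x ∈ G j) (h0 : (L ^ r) x = 0) : x = 0 := by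
  induction j using Nat.strong_induction_on generalizing r x with
  | _ j ih =>
  refine h.eq_zero_of_Λ_eq_zero_of_pow_apply_eq_zero hx ?_ h0 fun m _ => by omega
  by_cases hj : j ≤ 1
  · exact h.Λ_eq_zero hj hx
  obtain _ | m := r
  · rw [show x = 0 by simpa using h0, map_zero]
  have key := congrArg L (h.Λ_L_pow_succ m hx)
  rw [h0, map_zero, map_zero, map_add, map_smul, ← Module.End.mul_apply, ← pow_succ',
    ← Module.End.mul_apply L, ← pow_succ', h0, smul_zero, add_zero] at key
  exact ih (j - 2) (by omega) (by omega) (h.Λ_mem hx) key.symm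

theorem Λ_eq_zero_iff_pow_apply_eq_zero (h : IsLefschetzPair G n L Λ) {k : ℕ} {x : E}
    (hk : k ≤ n) (hx : x ∈ G k) : Λ x = 0 ↔ (L ^ (n - k + 1)) x = 0 := by
  have key := h.Λ_L_pow_succ (n - k) hx
  rw [show ((n : K) - k - (n - k : ℕ)) = 0 by push_cast [Nat.cast_sub hk]; ring, mul_zero,
    zero_smul, add_zero] at key
  constructor
  · intro hΛ
    rw [hΛ, map_zero] at key
    exact h.eq_zero_of_Λ_eq_zero_of_lt (h.pow_mem _ hx) key (by omega)
  · intro h0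
    by_cases hk1 : k ≤ 1
    · exact h.Λ_eq_zero hk1 hx
    rw [h0, map_zero, eq_comm] at key
    exact h.eq_zero_of_pow_apply_eq_zero (by omega) (h.Λ_mem hx) key

end IsLefschetzPair

section ExteriorAlgebra

variable {R M : Type*} [CommRing R] [AddCommGroup M] [Module R M]

theorem ι_mem_exteriorPower_one (v : M) : ι R v ∈ ⋀[R]^1 M := by
  rw [exteriorPower, pow_one]
  exact LinearMap.mem_range_self _ v

theorem contractLeft_eq_zero_of_mem_exteriorPower_zero (φ : Module.Dual R M)
    {x : ExteriorAlgebra R M} (hx : x ∈ ⋀[R]^0 M) : contractLeft φ x = 0 := by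
  obtain ⟨r, rfl⟩ := Submodule.mem_one.mp (by simpa using hx)
  exact contractLeft_algebraMap _ _ r

theorem contractLeft_mem_exteriorPower (φ : Module.Dual R M) {j : ℕ}
    {x : ExteriorAlgebra R M} (hx : x ∈ ⋀[R]^j M) : contractLeft φ x ∈ ⋀[R]^(j - 1) M := by
  induction hx using Submodule.pow_induction_on_left' with
  | algebraMap r => simp [contractLeft_algebraMap]
  | add x y i _ _ ihx ihy => rw [map_add]; exact add_mem ihx ihy
  | mem_mul m hm i y hy ih =>
    obtain ⟨v, rfl⟩ := hm
    rw [contractLeft_ι_mul, Nat.succ_sub_one]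
    refine sub_mem (Submodule.smul_mem _ _ hy) ?_
    obtain _ | i := i
    · rw [contractLeft_eq_zero_of_mem_exteriorPower_zero φ hy, mul_zero]
      exact zero_mem _
    · simpa [add_comm 1 i] using SetLike.GradedMul.mul_mem (ι_mem_exteriorPower_one v) ih

theorem exteriorPower_eq_bot_of_card_lt {κ : Type*} [Fintype κ] [LinearOrder κ]
    (b : Module.Basis κ R M) {j : ℕ} (hj : Fintype.card κ < j) : ⋀[R]^j M = ⊥ := by
  have hspan := exteriorPower.ιMulti_family_span_of_span R (n := j) b.span_eq
  have : IsEmpty (Set.powersetCard κ j) := Set.isEmpty_coe_sort.mpr (by simpa using hj)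
  rw [Set.range_eq_empty, Submodule.span_empty, eq_comm, Submodule.eq_bot_iff] at hspan
  rw [Submodule.eq_bot_iff]
  intro x hx
  simpa using hspan ⟨x, hx⟩ Submodule.mem_top

theorem sum_ι_mul_contractLeft_coord {κ : Type*} [Fintype κ] (b : Module.Basis κ R M) {j : ℕ}
    {x : ExteriorAlgebra R M} (hx : x ∈ ⋀[R]^j M) :
    ∑ p, ι R (b p) * contractLeft (b.coord p) x = (j : R) • x := by
  induction hx using Submodule.pow_induction_on_left' with
  | algebraMap r => simp [contractLeft_algebraMap]
  | add x y i _ _ ihx ihy =>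
    simp only [map_add, mul_add, Finset.sum_add_distrib, ihx, ihy, smul_add]
  | mem_mul m hm i x hx ih =>
    obtain ⟨v, rfl⟩ := hm
    have hswap (p) : ι R (b p) * (ι R v * contractLeft (b.coord p) x) =
        -(ι R v * (ι R (b p) * contractLeft (b.coord p) x)) := by
      rw [← mul_assoc, ← mul_assoc, eq_neg_of_add_eq_zero_left (ι_add_mul_swap (b p) v), neg_mul]
    have hv : ∑ p, b.coord p v • ι R (b p) = ι R v := by
      simp only [← map_smul, ← map_sum, Module.Basis.coord_apply, b.sum_repr]
    simp only [contractLeft_ι_mul, mul_sub, mul_smul_comm, hswap, sub_neg_eq_add,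
      Finset.sum_add_distrib, ← Finset.mul_sum, ih, ← smul_mul_assoc, ← Finset.sum_mul, hv]
    push_cast
    rw [add_smul, one_smul, add_mul, add_comm]

theorem contractLeft_sum_ι_mul_ι_mul {κ : Type*} [Fintype κ] (φ : Module.Dual R M)
    (a b : κ → M) (x : ExteriorAlgebra R M) :
    contractLeft φ ((∑ i, ι R (a i) * ι R (b i)) * x) =
      (∑ i, ι R (a i) * ι R (b i)) * contractLeft φ x +
        ι R (∑ i, (φ (a i) • b i - φ (b i) • a i)) * x := by
  simp only [Finset.sum_mul, map_sum, mul_assoc, contractLeft_ι_mul, map_sub, map_smul, mul_sub,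
    mul_smul_comm, sub_mul, smul_mul_assoc, sub_sub_eq_add_sub, ← Finset.sum_add_distrib]
  refine Finset.sum_congr rfl fun i _ => ?_
  abel

end ExteriorAlgebra

section Darboux

variable {n : ℕ}

def darbouxFst (i : Fin n) : Fin (2 * n) := ⟨2 * i.1, by omega⟩

def darbouxSnd (i : Fin n) : Fin (2 * n) := ⟨2 * i.1 + 1, by omega⟩

theorem darbouxFst_inj {i i' : Fin n} : darbouxFst i = darbouxFst i' ↔ i = i' := by
  simp [darbouxFst, Fin.ext_iff]

theorem darbouxSnd_inj {i i' : Fin n} : darbouxSnd i = darbouxSnd i' ↔ i = i' := by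
  simp [darbouxSnd, Fin.ext_iff]

theorem darbouxFst_ne_darbouxSnd (i i' : Fin n) : darbouxFst i ≠ darbouxSnd i' := by
  simp only [darbouxFst, darbouxSnd, ne_eq, Fin.ext_iff]
  omega

theorem sum_darbouxFst_add_darbouxSnd {A : Type*} [AddCommMonoid A] (g : Fin (2 * n) → A) :
    ∑ i, (g (darbouxFst i) + g (darbouxSnd i)) = ∑ p, g p := by
  rw [← (finProdFinEquiv.trans (finCongr (mul_comm n 2))).sum_comp, Fintype.sum_prod_type]
  refine Finset.sum_congr rfl fun i _ => ?_
  rw [Fin.sum_univ_two]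
  congr 2 <;> ext <;> simp [darbouxFst, darbouxSnd, add_comm]

variable {R M : Type*} [CommRing R] [AddCommGroup M] [Module R M]
  (f : Module.Basis (Fin (2 * n)) R M)

noncomputable def darbouxForm : ExteriorAlgebra R M :=
  ∑ i, ι R (f (darbouxFst i)) * ι R (f (darbouxSnd i))

noncomputable def dualLefschetz : Module.End R (ExteriorAlgebra R M) :=
  ∑ i, (contractLeft (f.coord (darbouxSnd i))).comp (contractLeft (f.coord (darbouxFst i)))

theorem darbouxForm_mem_exteriorPower_two : darbouxForm f ∈ ⋀[R]^2 M :=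
  Submodule.sum_mem _ fun _ _ =>
    SetLike.GradedMul.mul_mem (ι_mem_exteriorPower_one _) (ι_mem_exteriorPower_one _)

theorem dualLefschetz_mem_exteriorPower {j : ℕ} {x : ExteriorAlgebra R M}
    (hx : x ∈ ⋀[R]^j M) : dualLefschetz f x ∈ ⋀[R]^(j - 2) M := by
  rw [dualLefschetz, LinearMap.sum_apply]
  exact Submodule.sum_mem _ fun _ _ =>
    contractLeft_mem_exteriorPower _ (contractLeft_mem_exteriorPower _ hx)

theorem dualLefschetz_eq_zero_of_le_one {j : ℕ} {x : ExteriorAlgebra R M} (hj : j ≤ 1)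
    (hx : x ∈ ⋀[R]^j M) : dualLefschetz f x = 0 := by
  rw [dualLefschetz, LinearMap.sum_apply]
  refine Finset.sum_eq_zero fun i _ => contractLeft_eq_zero_of_mem_exteriorPower_zero _ ?_
  simpa [show j - 1 = 0 by omega] using contractLeft_mem_exteriorPower _ hx

theorem contractLeft_darbouxFst_darbouxForm_mul (i : Fin n) (x : ExteriorAlgebra R M) :
    contractLeft (f.coord (darbouxFst i)) (darbouxForm f * x) =
      darbouxForm f * contractLeft (f.coord (darbouxFst i)) x + ι R (f (darbouxSnd i)) * x := by
  rw [darbouxForm, contractLeft_sum_ι_mul_ι_mul]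
  simp [Module.Basis.coord_apply, Finsupp.single_apply, darbouxFst_inj, darbouxFst_ne_darbouxSnd]

theorem contractLeft_darbouxSnd_darbouxForm_mul (i : Fin n) (x : ExteriorAlgebra R M) :
    contractLeft (f.coord (darbouxSnd i)) (darbouxForm f * x) =
      darbouxForm f * contractLeft (f.coord (darbouxSnd i)) x - ι R (f (darbouxFst i)) * x := by
  rw [darbouxForm, contractLeft_sum_ι_mul_ι_mul]
  simp [Module.Basis.coord_apply, Finsupp.single_apply, darbouxSnd_inj,
    (darbouxFst_ne_darbouxSnd _ _).symm, sub_eq_add_neg]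

theorem dualLefschetz_darbouxForm_mul {j : ℕ} {x : ExteriorAlgebra R M} (hx : x ∈ ⋀[R]^j M) :
    dualLefschetz f (darbouxForm f * x) =
      darbouxForm f * dualLefschetz f x + ((n : R) - j) • x := by
  simp only [dualLefschetz, LinearMap.sum_apply, LinearMap.comp_apply,
    contractLeft_darbouxFst_darbouxForm_mul, map_add, contractLeft_darbouxSnd_darbouxForm_mul,
    contractLeft_ι_mul, Module.Basis.coord_apply, Module.Basis.repr_self, Finsupp.single_eq_same,
    one_smul]
  have hn : (n : R) • x = ∑ _i : Fin n, x := by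
    rw [Finset.sum_const, Finset.card_univ, Fintype.card_fin, Nat.cast_smul_eq_nsmul]
  rw [sub_smul, hn, ← sum_ι_mul_contractLeft_coord f hx, ← sum_darbouxFst_add_darbouxSnd,
    Finset.mul_sum, ← Finset.sum_sub_distrib, ← Finset.sum_add_distrib]
  refine Finset.sum_congr rfl fun i _ => ?_
  abel

theorem isLefschetzPair_darbouxForm :
    IsLefschetzPair (fun j => ⋀[R]^j M) n (LinearMap.mulLeft R (darbouxForm f))
      (dualLefschetz f) where
  L_mem hx := by
    simpa [add_comm] using SetLike.GradedMul.mul_mem (darbouxForm_mem_exteriorPower_two f) hx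
  Λ_mem := dualLefschetz_mem_exteriorPower f
  Λ_eq_zero := dualLefschetz_eq_zero_of_le_one f
  Λ_L := dualLefschetz_darbouxForm_mul f
  eq_zero_of_lt hj hx :=
    (Submodule.eq_bot_iff _).mp (exteriorPower_eq_bot_of_card_lt f (by simpa using hj)) _ hx

end Darboux

theorem primitive_iff_lefschetz_power_vanishes
    (n k : ℕ) (hk : k ≤ n) (V : Type) [AddCommGroup V] [Module ℝ V]
    (f : Module.Basis (Fin (2 * n)) ℝ (Module.Dual ℝ V))
    (ω : ExteriorAlgebra ℝ (Module.Dual ℝ V))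
    (hω : ω = ∑ i : Fin n,
      ExteriorAlgebra.ι ℝ (f ⟨2 * i.1, by have := i.2; omega⟩) *
      ExteriorAlgebra.ι ℝ (f ⟨2 * i.1 + 1, by have := i.2; omega⟩))
    (Λop : ExteriorAlgebra ℝ (Module.Dual ℝ V) →ₗ[ℝ] ExteriorAlgebra ℝ (Module.Dual ℝ V))
    (hΛ : Λop = ∑ i : Fin n,
      (CliffordAlgebra.contractLeft (f.coord ⟨2 * i.1 + 1, by have := i.2; omega⟩)).comp
        (CliffordAlgebra.contractLeft (f.coord ⟨2 * i.1, by have := i.2; omega⟩)))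
    (β : ExteriorAlgebra ℝ (Module.Dual ℝ V)) (hβ : β ∈ ⋀[ℝ]^k (Module.Dual ℝ V)) :
    Λop β = 0 ↔ ω ^ (n - k + 1) * β = 0 := by
  subst hω hΛ
  have key := (isLefschetzPair_darbouxForm f).Λ_eq_zero_iff_pow_apply_eq_zero hk hβ
  rw [LinearMap.pow_mulLeft, LinearMap.mulLeft_apply] at key
  exact key
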